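/- arXiv:2003.07842 — 2 statements merged into one kernel-verified Lean document; each statement's English description precedes it below -/
import Mathlib

section
/- Let (Ω, 𝓕, ν) be a probability space and let Θ = [-1,1]^M be equipped with its Borel σ-algebra 𝓔 and the uniform probability measure λ(dθ) = 2^{-M} dθ. Let (f_n)_{n∈ℕ} be a family of functions f_n : Θ × Ω → ℝ such that: (1) there exists f ∈ L²(Θ, 𝓔, λ) with Var_λ(f) > 0 such that for ν-almost all ω ∈ Ω, f_n(θ, ω) → f(θ) as n → ∞ for all θ ∈ Θ; and (2) for ν-almost all ω ∈ Ω, f_n(·, ω) is 𝓔-measurable and there exists φ_ω ∈ L²(Θ, 𝓔, λ) with |f_n(θ, ω)| ≤ φ_ω(θ) for all θ ∈ Θ and all n. Then for each j ∈ {1, …, M}, the stochastic first-order Sobol' indices satisfy S_j(f_n(·, ω)) → S_j(f) as n → ∞, for ν-almost all ω ∈ Ω. -/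
open MeasureTheory ProbabilityTheory Filter

/-- The uniform probability measure `λ(dθ) = 2^{-M} dθ` on `Θ = [-1,1]^M`,
realized as the product of `M` copies of the normalized Lebesgue measure on
`[-1,1]`, on `ℝ^M` with its Borel (product) σ-algebra. -/
noncomputable def uniformCube (M : ℕ) : Measure (Fin M → ℝ) :=
  Measure.pi fun _ => (2 : ENNReal)⁻¹ • volume.restrict (Set.Icc (-1 : ℝ) 1)

/-! For almost every `ω` the functions `f_n(·, ω)` converge pointwise to `f` under an `L²`
majorant, hence converge to `f` in `L²(λ)` (uniform integrability). Conditional expectation is an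
`L²`-contraction and the variance is `L²`-continuous, so numerator and denominator of `S_j`
converge, and the limiting denominator `Var(f)` is positive. -/

open scoped ENNReal Topology

instance isProbabilityMeasure_uniformCube (M : ℕ) : IsProbabilityMeasure (uniformCube M) := by
  have : IsProbabilityMeasure ((2 : ℝ≥0∞)⁻¹ • volume.restrict (Set.Icc (-1 : ℝ) 1)) :=
    ⟨by simp [Real.volume_Icc, one_add_one_eq_two, ENNReal.inv_mul_cancel]⟩
  unfold uniformCube
  infer_instance

namespace MeasureTheory

variable {α : Type*} {m m₀ : MeasurableSpace α} {μ : Measure α} {p : ℝ≥0∞}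

theorem UnifIntegrable.of_dominated {ι β : Type*} [NormedAddCommGroup β] {f : ι → α → β}
    {φ : α → ℝ} (hp : 1 ≤ p) (hp' : p ≠ ∞) (hφ : MemLp φ p μ)
    (hbd : ∀ i, ∀ᵐ x ∂μ, ‖f i x‖ ≤ φ x) : UnifIntegrable f p μ := by
  intro ε hε
  obtain ⟨δ, hδ, hφδ⟩ := hφ.eLpNorm_indicator_le hp hp' hε
  refine ⟨δ, hδ, fun i s hs hμs => (eLpNorm_mono_ae ?_).trans (hφδ s hs hμs)⟩
  filter_upwards [hbd i] with x hx
  simp only [norm_indicator_eq_indicator_norm]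
  exact Set.indicator_le_indicator (hx.trans (le_abs_self _))

theorem tendsto_eLpNorm_sub_of_dominated [IsFiniteMeasure μ] {β : Type*} [NormedAddCommGroup β]
    {f : ℕ → α → β} {g : α → β} {φ : α → ℝ} (hp : 1 ≤ p) (hp' : p ≠ ∞)
    (hf : ∀ n, AEStronglyMeasurable (f n) μ) (hg : MemLp g p μ) (hφ : MemLp φ p μ)
    (hbd : ∀ n, ∀ᵐ x ∂μ, ‖f n x‖ ≤ φ x)
    (hlim : ∀ᵐ x ∂μ, Tendsto (fun n => f n x) atTop (𝓝 (g x))) :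
    Tendsto (fun n => eLpNorm (f n - g) p μ) atTop (𝓝 0) :=
  tendsto_Lp_finite_of_tendsto_ae hp hp' hf hg (.of_dominated hp hp' hφ hbd) hlim

theorem tendsto_eLpNorm_condExp_sub {E : Type*} [NormedAddCommGroup E] [NormedSpace ℝ E]
    [CompleteSpace E] {f : ℕ → α → E} {g : α → E} (hp : 1 ≤ p) (hf : ∀ n, Integrable (f n) μ)
    (hg : Integrable g μ) (hfg : Tendsto (fun n => eLpNorm (f n - g) p μ) atTop (𝓝 0)) :
    Tendsto (fun n => eLpNorm (μ[f n|m] - μ[g|m]) p μ) atTop (𝓝 0) := by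
  refine tendsto_of_tendsto_of_tendsto_of_le_of_le tendsto_const_nhds hfg (fun _ => zero_le)
    fun n => ?_
  rw [← eLpNorm_congr_ae (condExp_sub (hf n) hg m)]
  exact eLpNorm_condExp_le_eLpNorm _ hp

theorem MemLp.integral_sq_eq_norm_toLp_sq {X : α → ℝ} (hX : MemLp X 2 μ) :
    ∫ x, X x ^ 2 ∂μ = ‖hX.toLp X‖ ^ 2 := by
  rw [← real_inner_self_eq_norm_sq, L2.inner_def]
  refine integral_congr_ae (hX.coeFn_toLp.mono fun x hx => ?_)
  simp [hx, sq]

end MeasureTheory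

namespace ProbabilityTheory

variable {α : Type*} {m₀ : MeasurableSpace α} {μ : Measure α} [IsProbabilityMeasure μ]

theorem tendsto_variance_of_tendsto_eLpNorm {X : ℕ → α → ℝ} {Y : α → ℝ}
    (hX : ∀ n, MemLp (X n) 2 μ) (hY : MemLp Y 2 μ)
    (hXY : Tendsto (fun n => eLpNorm (X n - Y) 2 μ) atTop (𝓝 0)) :
    Tendsto (fun n => variance (X n) μ) atTop (𝓝 (variance Y μ)) := by
  have hmean : Tendsto (fun n => ∫ x, X n x ∂μ) atTop (𝓝 (∫ x, Y x ∂μ)) :=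
    tendsto_integral_of_L1' Y hY.1 (.of_forall fun n => (hX n).integrable one_le_two) <|
      tendsto_of_tendsto_of_tendsto_of_le_of_le tendsto_const_nhds hXY (fun _ => zero_le)
        fun n => eLpNorm_le_eLpNorm_of_exponent_le one_le_two ((hX n).1.sub hY.1)
  have hsecond : Tendsto (fun n => ∫ x, X n x ^ 2 ∂μ) atTop (𝓝 (∫ x, Y x ^ 2 ∂μ)) := by
    simp only [MemLp.integral_sq_eq_norm_toLp_sq, hX, hY]
    exact ((Lp.tendsto_Lp_iff_tendsto_eLpNorm'' X hX Y hY).2 hXY).norm.pow 2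
  simp only [variance_eq_sub, hX, hY]
  exact hsecond.sub (hmean.pow 2)

end ProbabilityTheory

theorem stochastic_sobol_index_tendsto_ae_general
    {Ω : Type*} [MeasurableSpace Ω] (ν : Measure Ω)
    {M : ℕ} (f : ℕ → (Fin M → ℝ) → Ω → ℝ) (flim : (Fin M → ℝ) → ℝ)
    (hflim : MemLp flim 2 (uniformCube M))
    (hvar : 0 < variance flim (uniformCube M))
    (hconv : ∀ᵐ ω ∂ν, ∀ θ, Tendsto (fun n => f n θ ω) atTop (nhds (flim θ)))
    (hmeas_bdd : ∀ᵐ ω ∂ν, (∀ n, Measurable fun θ => f n θ ω) ∧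
      ∃ φ : (Fin M → ℝ) → ℝ, MemLp φ 2 (uniformCube M) ∧ ∀ θ, ∀ n, |f n θ ω| ≤ φ θ) :
    ∀ j : Fin M, ∀ᵐ ω ∂ν,
      Tendsto
        (fun n =>
          variance
              ((uniformCube M)[(fun θ => f n θ ω)|
                MeasurableSpace.comap (fun θ : Fin M → ℝ => θ j) inferInstance])
              (uniformCube M) /
            variance (fun θ => f n θ ω) (uniformCube M))
        atTop
        (nhds
          (variance
              ((uniformCube M)[flim|
                MeasurableSpace.comap (fun θ : Fin M → ℝ => θ j) inferInstance])
              (uniformCube M) /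
            variance flim (uniformCube M))) := by
  intro j
  filter_upwards [hconv, hmeas_bdd] with ω hlim ⟨hmeas, φ, hφ, hbd⟩
  have hdom : ∀ n, ∀ᵐ θ ∂uniformCube M, ‖f n θ ω‖ ≤ φ θ := fun n => .of_forall fun θ => hbd θ n
  have hmemL2 : ∀ n, MemLp (f n · ω) 2 (uniformCube M) := fun n =>
    hφ.of_le (hmeas n).aestronglyMeasurable <| (hdom n).mono fun θ h => h.trans (le_abs_self _)
  have hconvL2 := tendsto_eLpNorm_sub_of_dominated one_le_two ENNReal.ofNat_ne_top
    (fun n => (hmemL2 n).1) hflim hφ hdom (.of_forall hlim)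
  have hconvCondExp := tendsto_eLpNorm_condExp_sub
    (m := MeasurableSpace.comap (fun θ : Fin M → ℝ => θ j) inferInstance) one_le_two
    (fun n => (hmemL2 n).integrable one_le_two) (hflim.integrable one_le_two) hconvL2
  exact (tendsto_variance_of_tendsto_eLpNorm (fun n => (hmemL2 n).condExp one_le_two)
    (hflim.condExp one_le_two) hconvCondExp).div
    (tendsto_variance_of_tendsto_eLpNorm hmemL2 hflim hconvL2) hvar.ne'

/-- Almost sure convergence of stochastic first-order Sobol' indices:
if for ν-a.a. `ω` the functions `f_n(·, ω)` are measurable, converge pointwise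
on `Θ` to `f ∈ L²(Θ, λ)` with `Var_λ(f) > 0`, and are dominated by some
`φ_ω ∈ L²(Θ, λ)`, then for each coordinate `j`,
`S_j(f_n(·, ω)) = Var(E[f_n(·,ω)|θ_j])/Var(f_n(·,ω)) → S_j(f)` ν-almost surely. -/
theorem stochastic_sobol_index_tendsto_ae
    {Ω : Type*} [MeasurableSpace Ω] (ν : Measure Ω) [IsProbabilityMeasure ν]
    {M : ℕ} (f : ℕ → (Fin M → ℝ) → Ω → ℝ) (flim : (Fin M → ℝ) → ℝ)
    (hflim : MemLp flim 2 (uniformCube M))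
    (hvar : 0 < variance flim (uniformCube M))
    (hconv : ∀ᵐ ω ∂ν, ∀ θ, Tendsto (fun n => f n θ ω) atTop (nhds (flim θ)))
    (hmeas_bdd : ∀ᵐ ω ∂ν, (∀ n, Measurable fun θ => f n θ ω) ∧
      ∃ φ : (Fin M → ℝ) → ℝ, MemLp φ 2 (uniformCube M) ∧ ∀ θ, ∀ n, |f n θ ω| ≤ φ θ) :
    ∀ j : Fin M, ∀ᵐ ω ∂ν,
      Tendsto
        (fun n =>
          variance
              ((uniformCube M)[(fun θ => f n θ ω)|
                MeasurableSpace.comap (fun θ : Fin M → ℝ => θ j) inferInstance])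
              (uniformCube M) /
            variance (fun θ => f n θ ω) (uniformCube M))
        atTop
        (nhds
          (variance
              ((uniformCube M)[flim|
                MeasurableSpace.comap (fun θ : Fin M → ℝ => θ j) inferInstance])
              (uniformCube M) /
            variance flim (uniformCube M))) :=
  stochastic_sobol_index_tendsto_ae_general ν f flim hflim hvar hconv hmeas_bdd
end

section
/- Let (Ω, 𝓕, ν) be a probability space and let Θ = [-1,1]^M be equipped with its Borel σ-algebra 𝓔 and the uniform probability measure λ(dθ) = 2^{-M} dθ. Let (f_n)_{n∈ℕ} be functions f_n : Θ × Ω → ℝ such that there exists f ∈ L²(Θ, 𝓔, λ) with Var_λ(f) > 0 and for ν-almost all ω: f_n(θ, ω) → f(θ) for all θ ∈ Θ, each f_n(·, ω) is 𝓔-measurable, and there exists φ_ω ∈ L²(Θ, 𝓔, λ) with |f_n(θ, ω)| ≤ φ_ω(θ) for all θ and all n. Then for every nonempty subset U ⊆ {1, …, M}, the group Sobol' indices satisfy S_U(f_n(·, ω)) → S_U(f) as n → ∞, for ν-almost all ω ∈ Ω. -/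
open MeasureTheory ProbabilityTheory Filter

/-- The sub-σ-algebra of the (Borel) product σ-algebra of `Θ = [-1,1]^M`
generated by the coordinate projections `θ ↦ θ j` for `j ∈ U`. -/
def coordSigmaAlgebra (M : ℕ) (U : Finset (Fin M)) : MeasurableSpace (Fin M → ℝ) :=
  ⨆ j ∈ U, MeasurableSpace.comap (fun θ : Fin M → ℝ => θ j) inferInstance

/-! For almost every `ω`, domination by `φ_ω ∈ L²` makes `f_n(·, ω)` uniformly integrable, so
Vitali's theorem upgrades pointwise convergence to convergence in `L²(λ)`. On `L²` the variance
`‖X‖² - ⟪1, X⟫²` is continuous and conditional expectation is a continuous linear projection, so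
numerator and denominator of `S_U(f_n(·, ω))` converge, and `Var_λ(f) > 0` lets the quotient
converge too. -/

open scoped ENNReal InnerProductSpace Topology

instance uniformCube.instIsProbabilityMeasure (M : ℕ) :
    IsProbabilityMeasure (uniformCube M) := by
  have : IsProbabilityMeasure ((2 : ℝ≥0∞)⁻¹ • volume.restrict (Set.Icc (-1 : ℝ) 1)) :=
    ⟨by norm_num [Real.volume_Icc, ENNReal.inv_mul_cancel]⟩
  unfold uniformCube
  infer_instance

theorem coordSigmaAlgebra_le (M : ℕ) (U : Finset (Fin M)) :
    coordSigmaAlgebra M U ≤ MeasurableSpace.pi :=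
  iSup₂_le fun j _ => (measurable_pi_apply j).comap_le

namespace MeasureTheory

theorem unifIntegrable_of_dominated {ι α β : Type*} {m : MeasurableSpace α} {μ : Measure α}
    [NormedAddCommGroup β] {p : ℝ≥0∞} (hp : 1 ≤ p) (hp' : p ≠ ∞) {f : ι → α → β} {φ : α → ℝ}
    (hφ : MemLp φ p μ) (hbd : ∀ i, ∀ᵐ x ∂μ, ‖f i x‖ ≤ φ x) : UnifIntegrable f p μ := by
  intro ε hε
  obtain ⟨δ, hδ, h⟩ := unifIntegrable_const (ι := ι) hp hp' hφ hε
  refine ⟨δ, hδ, fun i s hs hμs => (eLpNorm_mono_ae ?_).trans (h i s hs hμs)⟩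
  filter_upwards [hbd i] with x hx
  by_cases hxs : x ∈ s
  · simpa [hxs] using hx.trans (le_abs_self _)
  · simp [hxs]

namespace Lp

variable {α : Type*} {m0 : MeasurableSpace α} {μ : Measure α} [IsProbabilityMeasure μ]

theorem variance_eq_norm_sq_sub_inner_sq (X : Lp ℝ 2 μ) :
    variance X μ = ‖X‖ ^ 2 -
      ⟪indicatorConstLp 2 MeasurableSet.univ (measure_ne_top μ _) (1 : ℝ), X⟫_ℝ ^ 2 := by
  rw [variance_eq_sub (Lp.memLp X), L2.inner_indicatorConstLp_one, setIntegral_univ,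
    ← real_inner_self_eq_norm_sq, L2.inner_def]
  simp [sq]

theorem continuous_variance : Continuous fun X : Lp ℝ 2 μ => variance X μ := by
  simp_rw [variance_eq_norm_sq_sub_inner_sq]
  fun_prop

end Lp

end MeasureTheory

theorem stochastic_group_sobol_index_tendsto_ae_general
    {Ω : Type*} [MeasurableSpace Ω] (ν : Measure Ω)
    {M : ℕ} (f : ℕ → (Fin M → ℝ) → Ω → ℝ) (flim : (Fin M → ℝ) → ℝ)
    (hflim : MemLp flim 2 (uniformCube M))
    (hvar : 0 < variance flim (uniformCube M))
    (hconv : ∀ᵐ ω ∂ν, ∀ θ, Tendsto (fun n => f n θ ω) atTop (nhds (flim θ)))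
    (hmeas_bdd : ∀ᵐ ω ∂ν, (∀ n, Measurable fun θ => f n θ ω) ∧
      ∃ φ : (Fin M → ℝ) → ℝ, MemLp φ 2 (uniformCube M) ∧ ∀ θ, ∀ n, |f n θ ω| ≤ φ θ) :
    ∀ U : Finset (Fin M), U.Nonempty →
      ∀ᵐ ω ∂ν,
        Tendsto
          (fun n =>
            variance ((uniformCube M)[(fun θ => f n θ ω)|coordSigmaAlgebra M U])
                (uniformCube M) /
              variance (fun θ => f n θ ω) (uniformCube M))
          atTop
          (nhds
            (variance ((uniformCube M)[flim|coordSigmaAlgebra M U]) (uniformCube M) /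
              variance flim (uniformCube M))) := by
  intro U _
  filter_upwards [hconv, hmeas_bdd] with ω hconv_ω ⟨hmeas, φ, hφ, hbd⟩
  set μ := uniformCube M
  have hm := coordSigmaAlgebra_le M U
  have hdom : ∀ n, ∀ᵐ θ ∂μ, ‖f n θ ω‖ ≤ φ θ := fun n => ae_of_all _ (hbd · n)
  have hf : ∀ n, MemLp (fun θ => f n θ ω) 2 μ := fun n =>
    hφ.of_le (hmeas n).aestronglyMeasurable ((hdom n).mono fun θ h => h.trans (le_abs_self _))
  have hL2 : Tendsto (fun n => (hf n).toLp) atTop (𝓝 hflim.toLp) :=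
    (Lp.tendsto_Lp_iff_tendsto_eLpNorm'' _ hf _ hflim).2 <|
      tendsto_Lp_finite_of_tendsto_ae one_le_two ENNReal.ofNat_ne_top (fun n => (hf n).1) hflim
        (unifIntegrable_of_dominated one_le_two ENNReal.ofNat_ne_top hφ hdom)
        (ae_of_all _ hconv_ω)
  have hden : Tendsto (fun n => variance (fun θ => f n θ ω) μ) atTop (𝓝 (variance flim μ)) := by
    simpa only [Function.comp_def, variance_congr (MemLp.coeFn_toLp _)] using
      (Lp.continuous_variance.tendsto _).comp hL2
  have hnum : Tendsto (fun n => variance (μ[fun θ => f n θ ω|coordSigmaAlgebra M U]) μ) atTop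
      (𝓝 (variance (μ[flim|coordSigmaAlgebra M U]) μ)) := by
    simpa only [Function.comp_def, variance_congr (MemLp.condExpL2_ae_eq_condExp hm _)] using
      ((Lp.continuous_variance.comp <| continuous_subtype_val.comp
        (condExpL2 ℝ ℝ hm).continuous).tendsto _).comp hL2
  exact hnum.div hden hvar.ne'

/-- Almost sure convergence of stochastic group Sobol' indices: if for ν-a.a.
`ω` the functions `f_n(·, ω)` are measurable, converge pointwise on `Θ` to
`f ∈ L²(Θ, λ)` with `Var_λ(f) > 0`, and are dominated by some `φ_ω ∈ L²(Θ, λ)`,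
then for every nonempty `U ⊆ {1,…,M}`,
`S_U(f_n(·,ω)) = Var(E[f_n(·,ω)|θ_U])/Var(f_n(·,ω)) → S_U(f)` ν-almost surely. -/
theorem stochastic_group_sobol_index_tendsto_ae
    {Ω : Type*} [MeasurableSpace Ω] (ν : Measure Ω) [IsProbabilityMeasure ν]
    {M : ℕ} (f : ℕ → (Fin M → ℝ) → Ω → ℝ) (flim : (Fin M → ℝ) → ℝ)
    (hflim : MemLp flim 2 (uniformCube M))
    (hvar : 0 < variance flim (uniformCube M))
    (hconv : ∀ᵐ ω ∂ν, ∀ θ, Tendsto (fun n => f n θ ω) atTop (nhds (flim θ)))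
    (hmeas_bdd : ∀ᵐ ω ∂ν, (∀ n, Measurable fun θ => f n θ ω) ∧
      ∃ φ : (Fin M → ℝ) → ℝ, MemLp φ 2 (uniformCube M) ∧ ∀ θ, ∀ n, |f n θ ω| ≤ φ θ) :
    ∀ U : Finset (Fin M), U.Nonempty →
      ∀ᵐ ω ∂ν,
        Tendsto
          (fun n =>
            variance ((uniformCube M)[(fun θ => f n θ ω)|coordSigmaAlgebra M U])
                (uniformCube M) /
              variance (fun θ => f n θ ω) (uniformCube M))
          atTop
          (nhds
            (variance ((uniformCube M)[flim|coordSigmaAlgebra M U]) (uniformCube M) /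
              variance flim (uniformCube M))) :=
  stochastic_group_sobol_index_tendsto_ae_general ν f flim hflim hvar hconv hmeas_bdd
end
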